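/- Let (A, B) be a separating pair of continuous aggregation functions on [0,1]². Then the map ϱ_{A,B} satisfies the triangle inequality: for all α, β, γ ∈ Ĩ, ϱ_{A,B}(α, β) + ϱ_{A,B}(β, γ) ≥ ϱ_{A,B}(α, γ). -/

import Mathlib

/-- The set of intuitionistic fuzzy values (IFVs). -/
def Itilde : Set (ℝ × ℝ) :=
  {p | 0 ≤ p.1 ∧ p.1 ≤ 1 ∧ 0 ≤ p.2 ∧ p.2 ≤ 1 ∧ p.1 + p.2 ≤ 1}

/-- An aggregation function on `[0,1]²`. -/
structure IsAggregation (A : ℝ → ℝ → ℝ) : Prop where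
  mapsTo : ∀ x y, x ∈ Set.Icc (0 : ℝ) 1 → y ∈ Set.Icc (0 : ℝ) 1 →
    A x y ∈ Set.Icc (0 : ℝ) 1
  mono_left : ∀ x₁ x₂ y, x₁ ∈ Set.Icc (0 : ℝ) 1 → x₂ ∈ Set.Icc (0 : ℝ) 1 →
    y ∈ Set.Icc (0 : ℝ) 1 → x₁ ≤ x₂ → A x₁ y ≤ A x₂ y
  mono_right : ∀ x y₁ y₂, x ∈ Set.Icc (0 : ℝ) 1 → y₁ ∈ Set.Icc (0 : ℝ) 1 →
    y₂ ∈ Set.Icc (0 : ℝ) 1 → y₁ ≤ y₂ → A x y₁ ≤ A x y₂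
  zero : A 0 0 = 0
  one : A 1 1 = 1

/-- `Ā(α) = A(μ_α, 1 - ν_α)`. -/
def aggBar (A : ℝ → ℝ → ℝ) (p : ℝ × ℝ) : ℝ := A p.1 (1 - p.2)

/-- The distance measure `ϱ_{A,B}`. -/
noncomputable def vrhoAB (A B : ℝ → ℝ → ℝ) (a b : ℝ × ℝ) : ℝ :=
  if aggBar A a ≠ aggBar A b then (1 + |aggBar A a - aggBar A b|) / 2
  else |aggBar B a - aggBar B b| / 2

/-!
`ϱ_{A,B}` is the pullback along `α ↦ (Ā(α), B̄(α))` of a distance `lexDist` on `ℝ²` that puts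
points with distinct first coordinates at distance more than `1/2` and otherwise uses half the
distance of the second coordinates. Its triangle inequality is a case split on which first
coordinates coincide: when `u.1 = w.1` but `v.1` differs, both summands exceed `1/2`, so the
second coordinates only need to lie within `2` of each other — which holds since `B̄` takes
values in `[0,1]` on `Ĩ`.
-/

noncomputable def lexDist (u v : ℝ × ℝ) : ℝ :=
  if u.1 ≠ v.1 then (1 + |u.1 - v.1|) / 2 else |u.2 - v.2| / 2

lemma lexDist_of_fst_ne {u v : ℝ × ℝ} (h : u.1 ≠ v.1) : lexDist u v = (1 + |u.1 - v.1|) / 2 :=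
  if_pos h

lemma lexDist_of_fst_eq {u v : ℝ × ℝ} (h : u.1 = v.1) : lexDist u v = |u.2 - v.2| / 2 :=
  if_neg (not_not_intro h)

lemma lexDist_triangle {u v w : ℝ × ℝ} (hsnd : |u.2 - w.2| ≤ 2) :
    lexDist u w ≤ lexDist u v + lexDist v w := by
  have := abs_nonneg (u.1 - v.1)
  have := abs_nonneg (v.1 - w.1)
  have := abs_nonneg (u.2 - v.2)
  have := abs_nonneg (v.2 - w.2)
  rcases eq_or_ne u.1 v.1 with huv | huv <;> rcases eq_or_ne v.1 w.1 with hvw | hvw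
  · rw [lexDist_of_fst_eq huv, lexDist_of_fst_eq hvw, lexDist_of_fst_eq (huv.trans hvw)]
    linarith [abs_sub_le u.2 v.2 w.2]
  · rw [lexDist_of_fst_eq huv, lexDist_of_fst_ne hvw, lexDist_of_fst_ne (huv ▸ hvw), huv]
    linarith
  · rw [lexDist_of_fst_ne huv, lexDist_of_fst_eq hvw, lexDist_of_fst_ne (hvw ▸ huv), hvw]
    linarith
  · rw [lexDist_of_fst_ne huv, lexDist_of_fst_ne hvw]
    rcases eq_or_ne u.1 w.1 with huw | huw
    · rw [lexDist_of_fst_eq huw]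
      linarith
    · rw [lexDist_of_fst_ne huw]
      linarith [abs_sub_le u.1 v.1 w.1]

lemma vrhoAB_eq_lexDist (A B : ℝ → ℝ → ℝ) (a b : ℝ × ℝ) :
    vrhoAB A B a b = lexDist (aggBar A a, aggBar B a) (aggBar A b, aggBar B b) :=
  rfl

lemma IsAggregation.aggBar_mem_Icc {A : ℝ → ℝ → ℝ} (hA : IsAggregation A) {p : ℝ × ℝ}
    (hp : p ∈ Itilde) : aggBar A p ∈ Set.Icc (0 : ℝ) 1 := by
  obtain ⟨hμ₀, hμ₁, hν₀, hν₁, -⟩ := hp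
  exact hA.mapsTo p.1 (1 - p.2) ⟨hμ₀, hμ₁⟩ ⟨by linarith, by linarith⟩

theorem vrhoAB_triangle_general (A B : ℝ → ℝ → ℝ)
    (hB : IsAggregation B)
    (a b c : ℝ × ℝ) (ha : a ∈ Itilde) (hc : c ∈ Itilde) :
    vrhoAB A B a b + vrhoAB A B b c ≥ vrhoAB A B a c := by
  obtain ⟨ha₀, ha₁⟩ := hB.aggBar_mem_Icc ha
  obtain ⟨hc₀, hc₁⟩ := hB.aggBar_mem_Icc hc
  have hac : |aggBar B a - aggBar B c| ≤ 2 :=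
    (abs_sub_le_of_nonneg_of_le ha₀ ha₁ hc₀ hc₁).trans one_le_two
  simpa only [vrhoAB_eq_lexDist] using lexDist_triangle hac

/-- For a separating pair `(A, B)` of continuous aggregation functions,
`ϱ_{A,B}` satisfies the triangle inequality on `Ĩ`. -/
theorem vrhoAB_triangle (A B : ℝ → ℝ → ℝ)
    (hA : IsAggregation A) (hB : IsAggregation B)
    (hAc : ContinuousOn (fun p : ℝ × ℝ => A p.1 p.2)
      (Set.Icc (0 : ℝ) 1 ×ˢ Set.Icc (0 : ℝ) 1))
    (hBc : ContinuousOn (fun p : ℝ × ℝ => B p.1 p.2)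
      (Set.Icc (0 : ℝ) 1 ×ˢ Set.Icc (0 : ℝ) 1))
    (hsep : ∀ x₁ y₁ x₂ y₂, x₁ ∈ Set.Icc (0 : ℝ) 1 → y₁ ∈ Set.Icc (0 : ℝ) 1 →
      x₂ ∈ Set.Icc (0 : ℝ) 1 → y₂ ∈ Set.Icc (0 : ℝ) 1 →
      A x₁ y₁ = A x₂ y₂ → B x₁ y₁ = B x₂ y₂ → x₁ = x₂ ∧ y₁ = y₂)
    (a b c : ℝ × ℝ) (ha : a ∈ Itilde) (hb : b ∈ Itilde) (hc : c ∈ Itilde) :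
    vrhoAB A B a b + vrhoAB A B b c ≥ vrhoAB A B a c :=
  vrhoAB_triangle_general A B hB a b c ha hc
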